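/- arXiv:1705.05534 — 2 statements merged into one kernel-verified Lean document; each statement's English description precedes it below -/
import Mathlib

section
/- Let p be a prime, ν a natural number and m an integer. Let N be the number of quadruples (x₁,y₁,x₂,y₂) ∈ (ℤ/p^νℤ)⁴ with x₁·y₁ + x₂·y₂ = m (mod p^ν). Then 1 − p^{−2} ≤ p^{−3ν}·N ≤ 1 + p^{−1}. -/
/-!
Write `N_k(m)` for the number of solutions of `x₁y₁ + x₂y₂ = m` in `ZMod k`.
Over `ZMod (p^(n+1))`, if `y₁` is a unit then `x₁` is determined by the other three
variables, and if `y₁` is not a unit but `x₂` is, then `y₂` is determined; together these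
give `p^(3n+3) - p^(3n+1)` solutions. If neither is a unit, write `y₁ = p u`, `x₂ = p v`:
the equation becomes `p (x₁u + vy₂) = m`, which forces `p ∣ m` and then only depends on
`x₁, u, v, y₂` modulo `p^n`. Since `u ↦ p u` and reduction modulo `p^n` are both `p`-to-one,
there are `p² N_{p^n}(m/p)` such solutions. The recursion
`N_{p^(n+1)}(m) = p^(3n+3) - p^(3n+1) + [p ∣ m] p² N_{p^n}(m/p)`
gives the lower bound at once and the upper bound by induction.
-/

open Function

theorem Nat.card_subtype_and_add_card_subtype_and_not {α : Type*} [Finite α] (P Q : α → Prop) :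
    Nat.card {x // P x ∧ Q x} + Nat.card {x // P x ∧ ¬Q x} = Nat.card {x // P x} := by
  classical
  rw [← Nat.card_congr (Equiv.sumCompl fun x : {x // P x} ↦ Q x), Nat.card_sum,
    Nat.card_congr (Equiv.subtypeSubtypeEquivSubtypeInter P Q),
    Nat.card_congr (Equiv.subtypeSubtypeEquivSubtypeInter P (¬Q ·))]

def HasFiberCard {α β : Type*} (f : α → β) (k : ℕ) : Prop :=
  ∀ b ∈ Set.range f, Nat.card {a // f a = b} = k

theorem HasFiberCard.card_subtype_comp {α β : Type*} [Finite α] {f : α → β} {k : ℕ}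
    (hf : HasFiberCard f k) (P : β → Prop) :
    Nat.card {a // P (f a)} = k * Nat.card {b // P b ∧ b ∈ Set.range f} := by
  have : Finite {b // P b ∧ b ∈ Set.range f} :=
    Finite.of_injective (fun b ↦ (⟨b.1, b.2.2⟩ : Set.range f)) fun _ _ h ↦
      Subtype.ext (congrArg Subtype.val h :)
  have := Fintype.ofFinite {b // P b ∧ b ∈ Set.range f}
  rw [← Nat.card_congr (Equiv.sigmaSubtypeFiberEquivSubtype f
    (q := fun b ↦ P b ∧ b ∈ Set.range f) fun a ↦ (and_iff_left ⟨a, rfl⟩).symm),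
    Nat.card_sigma, Finset.sum_congr rfl fun b _ ↦ hf b.1 b.2.2, Finset.sum_const,
    Finset.card_univ, ← Nat.card_eq_fintype_card, smul_eq_mul, mul_comm]

theorem hasFiberCard_id (α : Type*) : HasFiberCard (id : α → α) 1 := by
  intro b _
  simp

theorem HasFiberCard.prodMap {α β γ δ : Type*} {f : α → β} {g : γ → δ} {k l : ℕ}
    (hf : HasFiberCard f k) (hg : HasFiberCard g l) : HasFiberCard (Prod.map f g) (k * l) := by
  rintro ⟨b, d⟩ hbd
  rw [Set.range_prodMap] at hbd
  rw [← hf b hbd.1, ← hg d hbd.2, ← Nat.card_prod,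
    ← Nat.card_congr Equiv.subtypeProdEquivProd]
  exact Nat.card_congr (Equiv.subtypeEquivRight fun _ ↦ Prod.ext_iff)

theorem AddMonoidHom.hasFiberCard {G H : Type*} [AddGroup G] [AddGroup H] (f : G →+ H) :
    HasFiberCard f (Nat.card f.ker) := by
  rintro _ ⟨a, rfl⟩
  exact Nat.card_congr (f.fiberEquivKer a)

theorem AddMonoidHom.card_eq_card_ker_mul {G H : Type*} [AddGroup G] [AddGroup H] [Finite G]
    {f : G →+ H} (hf : Surjective f) : Nat.card G = Nat.card f.ker * Nat.card H := by
  have h := f.hasFiberCard.card_subtype_comp fun _ ↦ True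
  simp only [true_and, hf.range_eq, Set.mem_univ] at h
  rwa [Nat.card_congr (Equiv.subtypeUnivEquiv fun _ ↦ trivial),
    Nat.card_congr (Equiv.subtypeUnivEquiv fun _ ↦ trivial)] at h

section Ring

variable {R : Type*} [CommRing R]

def hyperbolicForm (v : R × R × R × R) : R := v.1 * v.2.1 + v.2.2.1 * v.2.2.2

noncomputable def hyperbolicRepCount (R : Type*) [CommRing R] (c : R) : ℕ :=
  Nat.card {v : R × R × R × R // hyperbolicForm v = c}

theorem card_mul_add_eq_of_isUnit {α : Type*} (g : α → R) (P : α → Prop) (c : R) :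
    Nat.card {v : R × R × α // v.1 * v.2.1 + g v.2.2 = c ∧ IsUnit v.2.1 ∧ P v.2.2} =
      Nat.card Rˣ * Nat.card {a // P a} := by
  rw [← Nat.card_prod]
  refine Nat.card_congr
    { toFun := fun v ↦ (v.2.2.1.unit, ⟨v.1.2.2, v.2.2.2⟩)
      invFun := fun w ↦ ⟨(↑w.1⁻¹ * (c - g w.2), w.1, w.2),
        by simp only [mul_right_comm, Units.inv_mul, one_mul, sub_add_cancel], w.1.isUnit, w.2.2⟩
      left_inv := ?_
      right_inv := fun w ↦ by ext <;> simp }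
  rintro ⟨⟨x, y, a⟩, hc, hy, ha⟩
  ext
  · simp [← hc, mul_left_comm _ x]
  · simp
  · simp

theorem hyperbolicRepCount_eq [Finite R] (c : R) :
    hyperbolicRepCount R c =
      Nat.card Rˣ * (Nat.card R * Nat.card R) +
        Nat.card Rˣ * (Nat.card {y : R // ¬IsUnit y} * Nat.card R) +
          Nat.card {v // hyperbolicForm v = c ∧ ¬IsUnit v.2.1 ∧ ¬IsUnit v.2.2.1} := by
  have y₁_unit : Nat.card {v // hyperbolicForm v = c ∧ IsUnit v.2.1} =
      Nat.card Rˣ * (Nat.card R * Nat.card R) := by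
    have h := card_mul_add_eq_of_isUnit (fun a : R × R ↦ a.1 * a.2) (fun _ ↦ True) c
    rw [Nat.card_congr (Equiv.subtypeUnivEquiv fun _ ↦ trivial), Nat.card_prod] at h
    rw [← h]
    exact Nat.card_congr (Equiv.subtypeEquivRight fun _ ↦ by rw [and_true]; rfl)
  have x₂_unit : Nat.card {v // (hyperbolicForm v = c ∧ ¬IsUnit v.2.1) ∧ IsUnit v.2.2.1} =
      Nat.card Rˣ * (Nat.card {y : R // ¬IsUnit y} * Nat.card R) := by
    -- reorder to `(y₂, x₂, (y₁, x₁))`, so that `x₂` is the unit coefficient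
    let e : R × R × R × R ≃ R × R × (R × R) :=
      { toFun := fun v ↦ (v.2.2.2, v.2.2.1, v.2.1, v.1)
        invFun := fun w ↦ (w.2.2.2, w.2.2.1, w.2.1, w.1)
        left_inv := fun _ ↦ rfl
        right_inv := fun _ ↦ rfl }
    have h := card_mul_add_eq_of_isUnit (fun a : R × R ↦ a.1 * a.2) (¬IsUnit ·.1) c
    rw [Nat.card_congr (Equiv.prodSubtypeFstEquivSubtypeProd (β := R) (p := (¬IsUnit ·))),
      Nat.card_prod] at h
    rw [← h]
    refine Nat.card_congr (e.subtypeEquiv fun v ↦ ?_)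
    simp only [hyperbolicForm, e, Equiv.coe_fn_mk]
    rw [add_comm, mul_comm v.1, mul_comm v.2.2.1]
    tauto
  rw [hyperbolicRepCount, ← Nat.card_subtype_and_add_card_subtype_and_not _ (IsUnit ·.2.1),
    ← Nat.card_subtype_and_add_card_subtype_and_not
      (fun v ↦ hyperbolicForm v = c ∧ ¬IsUnit v.2.1) (IsUnit ·.2.2.1), y₁_unit, x₂_unit,
    add_assoc]
  congr 2
  exact Nat.card_congr (Equiv.subtypeEquivRight fun _ ↦ and_assoc)

theorem hyperbolicRepCount_of_subsingleton [Subsingleton R] (c : R) :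
    hyperbolicRepCount R c = 1 := by
  rw [hyperbolicRepCount, Nat.card_congr (Equiv.subtypeUnivEquiv fun _ ↦ Subsingleton.elim _ _)]
  simp

end Ring

namespace ZMod

variable {p : ℕ} [hp : Fact p.Prime] (n : ℕ)

theorem prime_mul_eq_zero_iff (x : ZMod (p ^ (n + 1))) :
    (p : ZMod (p ^ (n + 1))) * x = 0 ↔
      castHom (pow_dvd_pow p n.le_succ) (ZMod (p ^ n)) x = 0 := by
  rw [castHom_apply, cast_eq_val, ← natCast_zmod_val x, ← Nat.cast_mul, natCast_eq_zero_iff,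
    natCast_eq_zero_iff, natCast_zmod_val]
  generalize x.val = a
  rw [pow_succ', Nat.mul_dvd_mul_iff_left hp.out.pos]

theorem not_isUnit_iff_mem_range_prime_mul (x : ZMod (p ^ (n + 1))) :
    ¬IsUnit x ↔ x ∈ Set.range ((p : ZMod (p ^ (n + 1))) * ·) := by
  constructor
  · intro hx
    obtain ⟨k, hk⟩ : p ∣ x.val := by
      contrapose! hx
      rw [← natCast_zmod_val x, isUnit_iff_coprime]
      exact (((Nat.Prime.coprime_iff_not_dvd hp.out).2 hx).pow_left _).symm
    exact ⟨k, by simp only [← Nat.cast_mul, ← hk, natCast_zmod_val]⟩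
  · rintro ⟨z, rfl⟩ hu
    simpa using hu.map (castHom (dvd_pow_self p n.succ_ne_zero) (ZMod p))

theorem card_ker_castHom :
    Nat.card (castHom (pow_dvd_pow p n.le_succ) (ZMod (p ^ n))).toAddMonoidHom.ker = p := by
  have h := AddMonoidHom.card_eq_card_ker_mul
    (f := (castHom (pow_dvd_pow p n.le_succ) (ZMod (p ^ n))).toAddMonoidHom)
    (ringHom_surjective _)
  rw [Nat.card_zmod, Nat.card_zmod] at h
  exact Nat.eq_of_mul_eq_mul_right (pow_pos hp.out.pos n) (h.symm.trans (pow_succ' p n))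

theorem hasFiberCard_castHom :
    HasFiberCard (castHom (pow_dvd_pow p n.le_succ) (ZMod (p ^ n))) p := by
  have h := (castHom (pow_dvd_pow p n.le_succ) (ZMod (p ^ n))).toAddMonoidHom.hasFiberCard
  rw [card_ker_castHom] at h
  exact h

theorem card_ker_prime_mul :
    Nat.card (AddMonoidHom.mulLeft (p : ZMod (p ^ (n + 1)))).ker = p := by
  have h : (AddMonoidHom.mulLeft (p : ZMod (p ^ (n + 1)))).ker =
      (castHom (pow_dvd_pow p n.le_succ) (ZMod (p ^ n))).toAddMonoidHom.ker := by
    ext x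
    exact prime_mul_eq_zero_iff n x
  rw [h, card_ker_castHom]

theorem hasFiberCard_prime_mul : HasFiberCard ((p : ZMod (p ^ (n + 1))) * ·) p := by
  have h := (AddMonoidHom.mulLeft (p : ZMod (p ^ (n + 1)))).hasFiberCard
  rw [card_ker_prime_mul] at h
  exact h

theorem card_units_pow_succ : Nat.card (ZMod (p ^ (n + 1)))ˣ = p ^ n * (p - 1) := by
  rw [Nat.card_eq_fintype_card, card_units_eq_totient, Nat.totient_prime_pow hp.out n.succ_pos,
    Nat.succ_sub_one]

theorem card_not_isUnit_pow_succ : Nat.card {y : ZMod (p ^ (n + 1)) // ¬IsUnit y} = p ^ n := by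
  have h := (hasFiberCard_prime_mul (p := p) n).card_subtype_comp fun _ ↦ True
  simp only [true_and, ← not_isUnit_iff_mem_range_prime_mul] at h
  rw [Nat.card_congr (Equiv.subtypeUnivEquiv fun _ ↦ trivial), Nat.card_zmod] at h
  exact Nat.eq_of_mul_eq_mul_left hp.out.pos (h.symm.trans (pow_succ' p n))

theorem card_prime_mul_hyperbolicForm_eq (m : ℤ) :
    Nat.card {w : ZMod (p ^ (n + 1)) × ZMod (p ^ (n + 1)) × ZMod (p ^ (n + 1)) ×
        ZMod (p ^ (n + 1)) // (p : ZMod (p ^ (n + 1))) * hyperbolicForm w = m} =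
      if (p : ℤ) ∣ m then
        p ^ 4 * hyperbolicRepCount (ZMod (p ^ n)) ((m / p : ℤ) : ZMod (p ^ n))
      else 0 := by
  set π := castHom (pow_dvd_pow p n.le_succ) (ZMod (p ^ n))
  split_ifs with hm
  · obtain ⟨m', rfl⟩ := hm
    have hπ : HasFiberCard π p := hasFiberCard_castHom n
    have hπ₄ := hπ.prodMap (hπ.prodMap (hπ.prodMap hπ))
    have hsurj : Surjective (Prod.map π (Prod.map π (Prod.map π π))) :=
      (ringHom_surjective π).prodMap <| (ringHom_surjective π).prodMap <|
        (ringHom_surjective π).prodMap (ringHom_surjective π)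
    have key := hπ₄.card_subtype_comp (hyperbolicForm · = (m' : ZMod (p ^ n)))
    simp only [hsurj.range_eq, Set.mem_univ, and_true] at key
    rw [Int.mul_ediv_cancel_left _ (Int.natCast_ne_zero.2 hp.out.ne_zero), hyperbolicRepCount,
      show p ^ 4 = p * (p * (p * p)) by ring, ← key]
    refine Nat.card_congr (Equiv.subtypeEquivRight fun w ↦ ?_)
    rw [Int.cast_mul, Int.cast_natCast, ← sub_eq_zero, ← mul_sub, prime_mul_eq_zero_iff,
      map_sub, sub_eq_zero, map_intCast]
    simp only [hyperbolicForm, map_add, map_mul, Prod.map_fst, Prod.map_snd]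
    rfl
  · refine Nat.card_eq_zero.2 (Or.inl ⟨fun ⟨w, hw⟩ ↦ hm ?_⟩)
    have h := congrArg (castHom (dvd_pow_self p n.succ_ne_zero) (ZMod p)) hw
    rwa [map_mul, map_natCast, natCast_self, zero_mul, map_intCast, eq_comm,
      intCast_zmod_eq_zero_iff_dvd] at h

theorem card_hyperbolicForm_eq_and_not_isUnit (m : ℤ) :
    Nat.card {v : ZMod (p ^ (n + 1)) × ZMod (p ^ (n + 1)) × ZMod (p ^ (n + 1)) ×
        ZMod (p ^ (n + 1)) // hyperbolicForm v = m ∧ ¬IsUnit v.2.1 ∧ ¬IsUnit v.2.2.1} =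
      if (p : ℤ) ∣ m then
        p ^ 2 * hyperbolicRepCount (ZMod (p ^ n)) ((m / p : ℤ) : ZMod (p ^ n))
      else 0 := by
  have hμ := hasFiberCard_prime_mul (p := p) n
  have hM := (hasFiberCard_id (ZMod (p ^ (n + 1)))).prodMap
    (hμ.prodMap (hμ.prodMap (hasFiberCard_id (ZMod (p ^ (n + 1))))))
  have key := hM.card_subtype_comp (hyperbolicForm · = (m : ZMod (p ^ (n + 1))))
  simp only [Set.range_prodMap, Set.range_id, Set.mem_prod, Set.mem_univ, true_and, and_true,
    ← not_isUnit_iff_mem_range_prime_mul] at key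
  apply Nat.eq_of_mul_eq_mul_left (pow_pos hp.out.pos 2)
  rw [mul_ite, mul_zero, ← mul_assoc, ← pow_add, ← card_prime_mul_hyperbolicForm_eq,
    show p ^ 2 = 1 * (p * (p * 1)) by ring, ← key]
  refine Nat.card_congr (Equiv.subtypeEquivRight fun w ↦ ?_)
  simp only [hyperbolicForm, Prod.map_fst, Prod.map_snd, id]
  ring_nf

/-- The term `p^(3n+1)` is moved to the left to avoid truncated subtraction. -/
theorem hyperbolicRepCount_pow_succ_add (m : ℤ) :
    hyperbolicRepCount (ZMod (p ^ (n + 1))) m + p ^ (3 * n + 1) =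
      p ^ (3 * n + 3) +
        if (p : ℤ) ∣ m then
          p ^ 2 * hyperbolicRepCount (ZMod (p ^ n)) ((m / p : ℤ) : ZMod (p ^ n))
        else 0 := by
  rw [hyperbolicRepCount_eq, card_units_pow_succ, card_not_isUnit_pow_succ, Nat.card_zmod,
    card_hyperbolicForm_eq_and_not_isUnit]
  obtain ⟨q, rfl⟩ : ∃ q, p = q + 1 := ⟨p - 1, (Nat.sub_add_cancel hp.out.one_le).symm⟩
  rw [Nat.add_sub_cancel]
  ring

theorem pow_le_hyperbolicRepCount (ν : ℕ) (m : ℤ) :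
    p ^ (3 * ν + 2) ≤ p ^ 2 * hyperbolicRepCount (ZMod (p ^ ν)) m + p ^ (3 * ν) := by
  cases ν with
  | zero =>
    rw [Nat.mul_zero, pow_zero, hyperbolicRepCount_of_subsingleton]
    simp
  | succ n =>
    have h := hyperbolicRepCount_pow_succ_add (p := p) n m
    calc p ^ (3 * (n + 1) + 2) = p ^ 2 * p ^ (3 * n + 3) := by ring
      _ ≤ p ^ 2 * (hyperbolicRepCount (ZMod (p ^ (n + 1))) m + p ^ (3 * n + 1)) := by
        gcongr
        omega
      _ = _ := by ring

theorem hyperbolicRepCount_le (ν : ℕ) (m : ℤ) :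
    p * hyperbolicRepCount (ZMod (p ^ ν)) m ≤ p ^ (3 * ν + 1) + p ^ (3 * ν) := by
  induction ν generalizing m with
  | zero =>
    rw [Nat.mul_zero, pow_zero, hyperbolicRepCount_of_subsingleton]
    simp
  | succ n ih =>
    have h := congrArg (p * ·) (hyperbolicRepCount_pow_succ_add (p := p) n m)
    have ih' := Nat.mul_le_mul_left (p ^ 2) (ih (m / p))
    split_ifs at h <;> ring_nf at h ih' ⊢ <;> omega

end ZMod

/-- Bounds for the representation numbers of `U ⊕ U = (ℤ⁴, Q = x₁y₁ + x₂y₂)` modulo `p^ν`: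
`1 - p⁻² ≤ p^{-3ν} N^{U⊕U}_{m,0}(p^ν) ≤ 1 + p⁻¹`. -/
theorem repNumber_two_hyperbolic_planes_bounds (p : ℕ) (hp : p.Prime) (ν : ℕ) (m : ℤ) :
    1 - ((p : ℚ) ^ 2)⁻¹ ≤
      ((p : ℚ) ^ (3 * ν))⁻¹ *
        (Nat.card {v : ZMod (p ^ ν) × ZMod (p ^ ν) × ZMod (p ^ ν) × ZMod (p ^ ν) //
          v.1 * v.2.1 + v.2.2.1 * v.2.2.2 = (m : ZMod (p ^ ν))} : ℚ) ∧
    ((p : ℚ) ^ (3 * ν))⁻¹ *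
        (Nat.card {v : ZMod (p ^ ν) × ZMod (p ^ ν) × ZMod (p ^ ν) × ZMod (p ^ ν) //
          v.1 * v.2.1 + v.2.2.1 * v.2.2.2 = (m : ZMod (p ^ ν))} : ℚ)
      ≤ 1 + (p : ℚ)⁻¹ := by
  have := Fact.mk hp
  have lower := ZMod.pow_le_hyperbolicRepCount (p := p) ν m
  have upper := ZMod.hyperbolicRepCount_le (p := p) ν m
  change 1 - _ ≤ _ * (hyperbolicRepCount (ZMod (p ^ ν)) m : ℚ) ∧
    _ * (hyperbolicRepCount (ZMod (p ^ ν)) m : ℚ) ≤ _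
  generalize hyperbolicRepCount (ZMod (p ^ ν)) m = N at lower upper ⊢
  have hp₀ : (0 : ℚ) < p := by exact_mod_cast hp.pos
  qify at lower upper
  rw [pow_add] at lower upper
  constructor
  · rw [inv_mul_eq_div, le_div_iff₀ (by positivity)]
    field_simp
    linarith
  · rw [inv_mul_eq_div, div_le_iff₀ (by positivity)]
    field_simp
    linarith
end

section
/- For every finite set S of prime numbers one has Σ_{P ⊆ S, |P| odd} Π_{p ∈ P} 1/(p(p−1)) < 4/5; in particular 1 − Σ_{P ⊆ S, |P| odd} Π_{p ∈ P} 1/(p(p−1)) > 0, where the sum runs over all subsets P of S of odd cardinality. -/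
/-!
With `x p = 1 / (p (p - 1))`, expanding the products shows that twice the odd-subset sum equals
`∏ (1 + x p) - ∏ (1 - x p)`. The primes below `70` contribute exactly computable factors. The
remaining primes have `∑ x p ≤ ∑_{n ≥ 70} (1 / (n - 1) - 1 / n) = 1 / 69`, so by the Weierstrass
product inequality and `(1 + x) (1 - x) ≤ 1` they shrink `∏ (1 - x p)` and enlarge `∏ (1 + x p)`
by at most the factor `68 / 69`, which still leaves the difference below `8 / 5`.
-/

open Finset

theorem two_mul_sum_odd_powerset_prod {ι R : Type*} [CommRing R] (s : Finset ι) (x : ι → R) :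
    2 * ∑ t ∈ s.powerset with Odd t.card, ∏ i ∈ t, x i =
      ∏ i ∈ s, (1 + x i) - ∏ i ∈ s, (1 - x i) := by
  have h_sub : ∏ i ∈ s, (1 - x i) = ∑ t ∈ s.powerset, (-1) ^ t.card * ∏ i ∈ t, x i := by
    simp only [sub_eq_add_neg, prod_one_add, prod_neg]
  rw [prod_one_add, h_sub, ← sum_sub_distrib, mul_sum, sum_filter]
  refine sum_congr rfl fun t _ => ?_
  rcases t.card.even_or_odd with h | h
  · simp [h.neg_one_pow, Nat.not_odd_iff_even.mpr h]
  · rw [if_pos h, h.neg_one_pow]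
    ring

section UnitInterval

variable {ι R : Type*} [Field R] [LinearOrder R] [IsStrictOrderedRing R] {x : ι → R}

theorem one_sub_sum_le_prod_one_sub (s : Finset ι) (hx₀ : ∀ i ∈ s, 0 ≤ x i)
    (hx₁ : ∀ i ∈ s, x i ≤ 1) : 1 - ∑ i ∈ s, x i ≤ ∏ i ∈ s, (1 - x i) := by
  induction s using Finset.cons_induction with
  | empty => simp
  | cons a s _ ih =>
    rw [sum_cons, prod_cons]
    have ih := ih (fun i hi => hx₀ i (mem_cons_of_mem hi)) (fun i hi => hx₁ i (mem_cons_of_mem hi))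
    have h_sum : 0 ≤ ∑ i ∈ s, x i := sum_nonneg fun i hi => hx₀ i (mem_cons_of_mem hi)
    have ha₀ := hx₀ a (mem_cons_self a s)
    have ha₁ := hx₁ a (mem_cons_self a s)
    nlinarith [mul_le_mul_of_nonneg_left ih (sub_nonneg.mpr ha₁), mul_nonneg ha₀ h_sum]

theorem prod_one_add_mul_prod_one_sub_le_one (s : Finset ι) (hx₀ : ∀ i ∈ s, 0 ≤ x i)
    (hx₁ : ∀ i ∈ s, x i ≤ 1) : (∏ i ∈ s, (1 + x i)) * ∏ i ∈ s, (1 - x i) ≤ 1 := by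
  rw [← prod_mul_distrib]
  refine prod_le_one (fun i hi => ?_) (fun i hi => ?_)
  · nlinarith [hx₀ i hi, hx₁ i hi]
  · nlinarith [hx₀ i hi]

theorem prod_one_add_le_inv_one_sub_sum (s : Finset ι) (hx₀ : ∀ i ∈ s, 0 ≤ x i)
    (hx₁ : ∀ i ∈ s, x i ≤ 1) (h_sum : ∑ i ∈ s, x i < 1) :
    ∏ i ∈ s, (1 + x i) ≤ (1 - ∑ i ∈ s, x i)⁻¹ := by
  have h_pos : 0 < 1 - ∑ i ∈ s, x i := sub_pos.mpr h_sum
  have h_sub := one_sub_sum_le_prod_one_sub s hx₀ hx₁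
  have h_add : 0 ≤ ∏ i ∈ s, (1 + x i) := prod_nonneg fun i hi => by linarith [hx₀ i hi]
  rw [← one_div, le_div_iff₀ h_pos]
  calc (∏ i ∈ s, (1 + x i)) * (1 - ∑ i ∈ s, x i)
      ≤ (∏ i ∈ s, (1 + x i)) * ∏ i ∈ s, (1 - x i) := mul_le_mul_of_nonneg_left h_sub h_add
    _ ≤ 1 := prod_one_add_mul_prod_one_sub_le_one s hx₀ hx₁

end UnitInterval

/-- `invMulPred 0 = invMulPred 1 = 0`, by the convention `1 / 0 = 0`. -/
noncomputable def invMulPred (n : ℕ) : ℝ := 1 / (n * (n - 1))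

theorem invMulPred_nonneg (n : ℕ) : 0 ≤ invMulPred n := by
  rcases n with _ | n
  · simp [invMulPred]
  · simp only [invMulPred, Nat.cast_succ, add_sub_cancel_right]
    positivity

theorem invMulPred_le_one (n : ℕ) : invMulPred n ≤ 1 := by
  rcases lt_or_ge n 2 with hn | hn
  · interval_cases n <;> simp [invMulPred]
  · have hn : (2 : ℝ) ≤ n := by exact_mod_cast hn
    unfold invMulPred
    rw [div_le_one (by nlinarith)]
    nlinarith

theorem invMulPred_eq_sub {n : ℕ} (hn : 2 ≤ n) :
    invMulPred n = 1 / ((n : ℝ) - 1) - 1 / n := by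
  have hn : (2 : ℝ) ≤ n := by exact_mod_cast hn
  have hn₀ : (n : ℝ) ≠ 0 := by positivity
  have hn₁ : (n : ℝ) - 1 ≠ 0 := by linarith
  unfold invMulPred
  field_simp
  ring

theorem sum_invMulPred_le {T : Finset ℕ} {N : ℕ} (hN : 2 ≤ N) (hT : ∀ n ∈ T, N ≤ n) :
    ∑ n ∈ T, invMulPred n ≤ 1 / ((N : ℝ) - 1) := by
  obtain ⟨M, hM⟩ := exists_nat_subset_range T
  have hT_Ico : T ⊆ Ico N (N + M) := fun n hn =>
    mem_Ico.mpr ⟨hT n hn, by have := mem_range.mp (hM hn); omega⟩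
  let f : ℕ → ℝ := fun n => -(1 / ((n : ℝ) - 1))
  have h_telescope : ∀ n ∈ Ico N (N + M), invMulPred n = f (n + 1) - f n := fun n hn => by
    rw [invMulPred_eq_sub (hN.trans (mem_Ico.mp hn).1)]
    simp only [f]
    push_cast
    ring
  have h_last : (0 : ℝ) ≤ 1 / (((N + M : ℕ) : ℝ) - 1) := by
    have : (2 : ℝ) ≤ ((N + M : ℕ) : ℝ) := by exact_mod_cast hN.trans (Nat.le_add_right N M)
    exact one_div_nonneg.mpr (by linarith)
  calc ∑ n ∈ T, invMulPred n ≤ ∑ n ∈ Ico N (N + M), invMulPred n :=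
        sum_le_sum_of_subset_of_nonneg hT_Ico fun n _ _ => invMulPred_nonneg n
    _ = f (N + M) - f N := by rw [sum_congr rfl h_telescope, sum_Ico_sub f (Nat.le_add_right N M)]
    _ ≤ 1 / ((N : ℝ) - 1) := by simp only [f]; linarith

theorem primesBelow_seventy : Nat.primesBelow 70 =
    {2, 3, 5, 7, 11, 13, 17, 19, 23, 29, 31, 37, 41, 43, 47, 53, 59, 61, 67} := by
  decide

theorem prod_one_add_invMulPred_primesBelow_le :
    ∏ p ∈ Nat.primesBelow 70, (1 + invMulPred p) ≤ 1939 / 1000 := by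
  rw [primesBelow_seventy]
  norm_num [invMulPred]

theorem le_prod_one_sub_invMulPred_primesBelow :
    187 / 500 ≤ ∏ p ∈ Nat.primesBelow 70, (1 - invMulPred p) := by
  rw [primesBelow_seventy]
  norm_num [invMulPred]

theorem prod_one_add_invMulPred_sub_prod_one_sub_lt {s : Finset ℕ} (hs : ∀ p ∈ s, p.Prime) :
    ∏ p ∈ s, (1 + invMulPred p) - ∏ p ∈ s, (1 - invMulPred p) < 8 / 5 := by
  set small := s.filter (fun p => p < 70)
  set large := s.filter (fun p => ¬ p < 70)
  have h_small : small ⊆ Nat.primesBelow 70 := fun p hp =>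
    Nat.mem_primesBelow.mpr ⟨(mem_filter.mp hp).2, hs p (mem_filter.mp hp).1⟩
  have hA_small : ∏ p ∈ small, (1 + invMulPred p) ≤ 1939 / 1000 :=
    (prod_le_prod_of_subset_of_one_le h_small
      (fun p _ => by linarith [invMulPred_nonneg p])
      (fun p _ _ => by linarith [invMulPred_nonneg p])).trans
      prod_one_add_invMulPred_primesBelow_le
  have hB_small : 187 / 500 ≤ ∏ p ∈ small, (1 - invMulPred p) :=
    le_prod_one_sub_invMulPred_primesBelow.trans <| prod_le_prod_of_subset_of_le_one h_small
      (fun p _ => by linarith [invMulPred_le_one p])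
      (fun p _ _ => by linarith [invMulPred_nonneg p])
  have h_tail : ∑ p ∈ large, invMulPred p ≤ 1 / 69 :=
    (sum_invMulPred_le (N := 70) le_add_self fun n hn => not_lt.mp (mem_filter.mp hn).2).trans_eq
      (by norm_num)
  have h₀ : ∀ p ∈ large, 0 ≤ invMulPred p := fun p _ => invMulPred_nonneg p
  have h₁ : ∀ p ∈ large, invMulPred p ≤ 1 := fun p _ => invMulPred_le_one p
  have hB_large : 68 / 69 ≤ ∏ p ∈ large, (1 - invMulPred p) := by
    linarith [one_sub_sum_le_prod_one_sub large h₀ h₁]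
  have hA_large : ∏ p ∈ large, (1 + invMulPred p) ≤ 69 / 68 :=
    calc ∏ p ∈ large, (1 + invMulPred p) ≤ (1 - ∑ p ∈ large, invMulPred p)⁻¹ :=
          prod_one_add_le_inv_one_sub_sum large h₀ h₁ (by linarith)
      _ ≤ (68 / 69)⁻¹ := inv_anti₀ (by norm_num) (by linarith)
      _ = 69 / 68 := by norm_num
  rw [← prod_filter_mul_prod_filter_not s (fun p => p < 70),
    ← prod_filter_mul_prod_filter_not s (fun p => p < 70)]
  calc (∏ p ∈ small, (1 + invMulPred p)) * (∏ p ∈ large, (1 + invMulPred p)) -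
        (∏ p ∈ small, (1 - invMulPred p)) * (∏ p ∈ large, (1 - invMulPred p))
      ≤ 1939 / 1000 * (69 / 68) - 187 / 500 * (68 / 69) := by
        gcongr
        exact prod_nonneg fun p _ => by linarith [invMulPred_nonneg p]
    _ < 8 / 5 := by norm_num

/-- For every finite set `S` of primes,
`Σ_{P ⊆ S, |P| odd} Π_{p ∈ P} 1/(p(p-1)) < 4/5`; in particular
`1 − Σ_{P ⊆ S, |P| odd} Π_{p ∈ P} 1/(p(p-1)) > 0`. -/
theorem sum_odd_subsets_prime_prod_lt (S : Finset Nat.Primes) :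
    ∑ P ∈ S.powerset.filter (fun P => Odd P.card), ∏ p ∈ P, 1 / ((p : ℝ) * ((p : ℝ) - 1))
      < 4 / 5 ∧
    0 < 1 - ∑ P ∈ S.powerset.filter (fun P => Odd P.card),
      ∏ p ∈ P, 1 / ((p : ℝ) * ((p : ℝ) - 1)) := by
  have h : 2 * ∑ P ∈ S.powerset with Odd P.card, ∏ p ∈ P, invMulPred p < 8 / 5 := by
    rw [two_mul_sum_odd_powerset_prod]
    have h_map := prod_one_add_invMulPred_sub_prod_one_sub_lt
      (s := S.map ⟨(↑), Nat.Primes.coe_nat_injective⟩) (by simpa using fun p _ => p.2)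
    rwa [prod_map, prod_map] at h_map
  simp only [invMulPred] at h
  exact ⟨by linarith, by linarith⟩
end
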